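/- RCPS with a valid upper confidence bound controls a general (possibly non-monotonic) risk: let R : Q_grid → ℝ be a risk function on a finite ordered grid q₁,…,q_M, and let R̂⁺(q) be random upper bounds satisfying P(R(q) ≤ R̂⁺(q)) ≥ 1 − δ for each fixed q. Define q̂ as the last grid point q_k such that R̂⁺(q_j) < α for all j ≤ k (and q̂ undefined/initial if R̂⁺(q₁) ≥ α). Then P(R(q̂) ≤ α, whenever q̂ is defined) ≥ 1 − δ. -/

import Mathlib

open MeasureTheory

/-! Only the first grid point `J` at which the risk exceeds `α` matters, and `J` is deterministic.
Whenever its bound covers it, `R̂⁺ J ≥ R J > α`, so fixed sequence testing stops before `J`;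
every selected point then precedes `J` and has risk at most `α`. Hence the good event contains
the single coverage event `{R J ≤ R̂⁺ J}`, which has probability at least `1 - δ`. -/

theorem le_of_forall_le_lt_of_minimal {ι : Type*} [LinearOrder ι] {R r : ι → ℝ} {α : ℝ} {J k : ι}
    (hJ : Minimal (fun j => α < R j) J) (hcover : R J ≤ r J) (hk : ∀ j ≤ k, r j < α) :
    R k ≤ α := by
  rcases lt_or_ge k J with hkJ | hJk
  · exact not_lt.mp (hJ.not_prop_of_lt hkJ)
  · exact absurd (hcover.trans_lt (hk J hJk)) hJ.prop.not_gt

theorem rcps_controls_general_risk_general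
    {Ω : Type*} [MeasurableSpace Ω] (μ : Measure Ω) [IsProbabilityMeasure μ]
    (M : ℕ) (R : Fin M → ℝ) (Rhat : Fin M → Ω → ℝ)
    (α δ : ℝ)
    (hUCB : ∀ j, 1 - ENNReal.ofReal δ ≤ μ {ω | R j ≤ Rhat j ω}) :
    1 - ENNReal.ofReal δ ≤
      μ {ω | ∀ k : Fin M,
        ((∀ j ≤ k, Rhat j ω < α) ∧ ∀ k' > k, ¬ (∀ j ≤ k', Rhat j ω < α)) → R k ≤ α} := by
  by_cases hexceed : ∃ j, α < R j
  · obtain ⟨J, hJ⟩ := exists_minimal_of_wellFoundedLT _ hexceed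
    exact (hUCB J).trans <| measure_mono fun ω hcover k hk =>
      le_of_forall_le_lt_of_minimal hJ hcover hk.1
  · push Not at hexceed
    refine (tsub_le_self.trans_eq measure_univ.symm).trans (measure_mono ?_)
    exact fun ω _ k _ => hexceed k

/-- RCPS with a marginally valid upper confidence bound controls a general (possibly
non-monotonic) risk: on a finite ordered grid `q_0, …, q_{M-1}` with risks `R j` and
level-`δ` upper confidence bounds `R̂⁺ j`, let `q̂` be the last grid point `k` such that
`R̂⁺ j < α` for all `j ≤ k` (undefined if `R̂⁺ 0 ≥ α`). Then with probability at least
`1 − δ`, whenever `q̂` is defined the selected point satisfies `R(q̂) ≤ α`. -/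
theorem rcps_controls_general_risk
    {Ω : Type*} [MeasurableSpace Ω] (μ : Measure Ω) [IsProbabilityMeasure μ]
    (M : ℕ) (R : Fin M → ℝ) (Rhat : Fin M → Ω → ℝ)
    (hRhatMeas : ∀ j, Measurable (Rhat j))
    (α δ : ℝ) (hα : 0 < α) (hα' : α < 1) (hδ : 0 < δ) (hδ' : δ < 1)
    (hUCB : ∀ j, 1 - ENNReal.ofReal δ ≤ μ {ω | R j ≤ Rhat j ω}) :
    1 - ENNReal.ofReal δ ≤
      μ {ω | ∀ k : Fin M,
        ((∀ j ≤ k, Rhat j ω < α) ∧ ∀ k' > k, ¬ (∀ j ≤ k', Rhat j ω < α)) → R k ≤ α} :=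
  rcps_controls_general_risk_general μ M R Rhat α δ hUCB
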